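/- arXiv:2107.05697 — 2 statements merged into one kernel-verified Lean document; each statement's English description precedes it below -/
import Mathlib

section
/- Let S be a finite set of states with probability weights μ : S → ℝ (μ(s) ≥ 0, Σ_s μ(s) = 1). For each s ∈ S let M_s be a nonempty finite set of instructions, a^g(s) a goal action in a finite action set A, and for each m ∈ M_s let p_{s,m}, q_{s,m} : A → ℝ be strictly positive probability mass functions on A. Let Q_ToM(m|s) = p_{s,m}(a^g(s)) / Σ_{m'∈M_s} p_{s,m'}(a^g(s)). Fix σ ∈ [0,1) and ε ≥ 0, and define Δ(s,m) = |q_{s,m}(a^g(s)) − p_{s,m}(a^g(s))|. If Σ_{s∈S} μ(s) Σ_{m∈M_s} (σ·Q_ToM(m|s) + (1−σ)/|M_s|) · KL(p_{s,m} ‖ q_{s,m}) ≤ ε, then Σ_{s∈S} μ(s) · (1/|M_s|) · Σ_{m∈M_s} Δ(s,m) ≤ √(ε / (2(1−σ))). -/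
lemma binary_pinsker {x y : ℝ} (hx0 : 0 < x) (hx1 : x < 1) (hy0 : 0 < y) (hy1 : y < 1) :
    2 * (x - y) ^ 2 ≤ x * Real.log (x / y) + (1 - x) * Real.log ((1 - x) / (1 - y)) := by
  set f : ℝ → ℝ := fun z =>
    x * (Real.log x - Real.log z) + (1 - x) * (Real.log (1 - x) - Real.log (1 - z))
      - 2 * (x - z) ^ 2 with hf
  have hd : ∀ z ∈ Set.Ioo (0 : ℝ) 1,
      HasDerivAt f ((z - x) * (2 * z - 1) ^ 2 / (z * (1 - z))) z := by
    intro z hz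
    obtain ⟨hz0, hz1⟩ := hz
    have h1 : HasDerivAt (fun w : ℝ => Real.log w) z⁻¹ z := Real.hasDerivAt_log hz0.ne'
    have h2 : HasDerivAt (fun w : ℝ => (1 : ℝ) - w) (-1) z := (hasDerivAt_id z).const_sub 1
    have h3 : HasDerivAt (fun w : ℝ => Real.log (1 - w)) ((1 - z)⁻¹ * (-1)) z :=
      (Real.hasDerivAt_log (by linarith)).comp z h2
    have h4 : HasDerivAt (fun w : ℝ => (x - w)) (-1) z := (hasDerivAt_id z).const_sub x
    have h5 : HasDerivAt (fun w : ℝ => (x - w) ^ 2) ((2 : ℕ) * (x - z) ^ 1 * (-1)) z := h4.pow 2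
    have h6 : HasDerivAt f
        (x * (0 - z⁻¹) + (1 - x) * (0 - (1 - z)⁻¹ * (-1)) - 2 * ((2 : ℕ) * (x - z) ^ 1 * (-1))) z := by
      exact ((((hasDerivAt_const z (Real.log x)).sub h1).const_mul x).add
        (((hasDerivAt_const z (Real.log (1 - x))).sub h3).const_mul (1 - x))).sub
        (h5.const_mul 2)
    convert h6 using 1
    have e1 : z ≠ 0 := hz0.ne'
    have e2 : (1 : ℝ) - z ≠ 0 := by linarith
    field_simp
    ring
  have hzero : f x = 0 := by simp [hf]
  have hmain : 0 ≤ f y := by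
    rcases le_total x y with hxy | hxy
    · have hmono : MonotoneOn f (Set.Icc x y) := by
        apply monotoneOn_of_hasDerivWithinAt_nonneg (convex_Icc x y)
          (f' := fun z => (z - x) * (2 * z - 1) ^ 2 / (z * (1 - z)))
        · intro z hz
          exact ((hd z ⟨lt_of_lt_of_le hx0 hz.1, lt_of_le_of_lt hz.2 hy1⟩).continuousAt).continuousWithinAt
        · intro z hz
          rw [interior_Icc] at hz
          exact ((hd z ⟨hx0.trans hz.1, hz.2.trans hy1⟩).hasDerivWithinAt)
        · intro z hz
          rw [interior_Icc] at hz
          have hzz : 0 < z * (1 - z) := by nlinarith [hz.1, hz.2, hx0, hy1]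
          apply div_nonneg _ hzz.le
          have : 0 ≤ z - x := by linarith [hz.1]
          positivity
      have := hmono (Set.left_mem_Icc.2 hxy) (Set.right_mem_Icc.2 hxy) hxy
      linarith [hzero]
    · have hanti : AntitoneOn f (Set.Icc y x) := by
        apply antitoneOn_of_hasDerivWithinAt_nonpos (convex_Icc y x)
          (f' := fun z => (z - x) * (2 * z - 1) ^ 2 / (z * (1 - z)))
        · intro z hz
          exact ((hd z ⟨lt_of_lt_of_le hy0 hz.1, lt_of_le_of_lt hz.2 hx1⟩).continuousAt).continuousWithinAt
        · intro z hz
          rw [interior_Icc] at hz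
          exact ((hd z ⟨hy0.trans hz.1, hz.2.trans hx1⟩).hasDerivWithinAt)
        · intro z hz
          rw [interior_Icc] at hz
          have hzz : 0 < z * (1 - z) := by nlinarith [hz.1, hz.2, hy0, hx1]
          apply div_nonpos_of_nonpos_of_nonneg _ hzz.le
          have : z - x ≤ 0 := by linarith [hz.2]
          nlinarith [sq_nonneg (2 * z - 1)]
      have := hanti (Set.left_mem_Icc.2 hxy) (Set.right_mem_Icc.2 hxy) hxy
      linarith [hzero]
  have hlx : Real.log (x / y) = Real.log x - Real.log y := Real.log_div hx0.ne' hy0.ne'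
  have hlx2 : Real.log ((1 - x) / (1 - y)) = Real.log (1 - x) - Real.log (1 - y) :=
    Real.log_div (by linarith) (by linarith)
  have hmain' : 0 ≤ x * (Real.log x - Real.log y) +
      (1 - x) * (Real.log (1 - x) - Real.log (1 - y)) - 2 * (x - y) ^ 2 := hmain
  rw [hlx, hlx2]
  linarith

lemma log_sum_ineq {ι : Type*} (t : Finset ι) (f g : ι → ℝ)
    (hf : ∀ i ∈ t, 0 < f i) (hg : ∀ i ∈ t, 0 < g i) (ht : t.Nonempty) :
    (∑ i ∈ t, f i) * Real.log ((∑ i ∈ t, f i) / (∑ i ∈ t, g i)) ≤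
      ∑ i ∈ t, f i * Real.log (f i / g i) := by
  set F := ∑ i ∈ t, f i with hF
  set G := ∑ i ∈ t, g i with hG
  have hF0 : 0 < F := Finset.sum_pos hf ht
  have hG0 : 0 < G := Finset.sum_pos hg ht
  have key : ∀ i ∈ t, f i * Real.log (F / G) ≤
      f i * Real.log (f i / g i) + (g i * F / G - f i) := by
    intro i hi
    have hfi := hf i hi
    have hgi := hg i hi
    have hu : 0 < f i * G / (g i * F) := by positivity
    have hlog := Real.one_sub_inv_le_log_of_pos hu
    have hql : Real.log (f i * G / (g i * F)) =
        Real.log (f i / g i) - Real.log (F / G) := by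
      rw [Real.log_div (by positivity) (by positivity),
        Real.log_div hfi.ne' hgi.ne', Real.log_div hF0.ne' hG0.ne',
        Real.log_mul hfi.ne' hG0.ne', Real.log_mul hgi.ne' hF0.ne']
      ring
    rw [hql] at hlog
    have hmul := mul_le_mul_of_nonneg_left hlog hfi.le
    have hid : f i * (1 - (f i * G / (g i * F))⁻¹) = f i - g i * F / G := by
      field_simp
    rw [hid] at hmul
    linarith [hmul]
  have hsum := Finset.sum_le_sum key
  rw [← Finset.sum_mul] at hsum
  have hr : ∑ i ∈ t, (f i * Real.log (f i / g i) + (g i * F / G - f i)) =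
      ∑ i ∈ t, f i * Real.log (f i / g i) := by
    rw [Finset.sum_add_distrib]
    have h0 : ∑ i ∈ t, (g i * F / G - f i) = 0 := by
      rw [Finset.sum_sub_distrib]
      have h1 : ∑ i ∈ t, g i * F / G = F := by
        rw [← Finset.sum_div, ← Finset.sum_mul, ← hG]
        field_simp
      rw [h1, ← hF, sub_self]
    rw [h0, add_zero]
  rw [hr] at hsum
  exact hsum

lemma pointwise_pinsker {A : Type*} [Fintype A] (p q : A → ℝ)
    (hp0 : ∀ a, 0 < p a) (hq0 : ∀ a, 0 < q a)
    (hp1 : ∑ a, p a = 1) (hq1 : ∑ a, q a = 1) (a : A) :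
    2 * (q a - p a) ^ 2 ≤ ∑ b, p b * Real.log (p b / q b) := by
  classical
  set t := Finset.univ.erase a with ht
  have hsplit : ∀ r : A → ℝ, r a + ∑ b ∈ t, r b = ∑ b, r b := fun r =>
    Finset.add_sum_erase _ r (Finset.mem_univ a)
  rcases Finset.eq_empty_or_nonempty t with he | hne
  · have hpa : p a = 1 := by
      have := hsplit p
      rw [he, Finset.sum_empty, add_zero, hp1] at this
      exact this
    have hqa : q a = 1 := by
      have := hsplit q
      rw [he, Finset.sum_empty, add_zero, hq1] at this
      exact this
    have hnn : 0 ≤ ∑ b, p b * Real.log (p b / q b) := by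
      have := hsplit (fun b => p b * Real.log (p b / q b))
      rw [he, Finset.sum_empty, add_zero] at this
      rw [← this, hpa, hqa]
      simp
    rw [hpa, hqa]
    simpa using hnn
  · set x := p a with hx
    set y := q a with hy
    have hFp : ∑ b ∈ t, p b = 1 - x := by
      have := hsplit p; rw [hp1] at this; linarith
    have hFq : ∑ b ∈ t, q b = 1 - y := by
      have := hsplit q; rw [hq1] at this; linarith
    have hFp0 : 0 < ∑ b ∈ t, p b := Finset.sum_pos (fun b _ => hp0 b) hne
    have hFq0 : 0 < ∑ b ∈ t, q b := Finset.sum_pos (fun b _ => hq0 b) hne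
    have hx1 : x < 1 := by rw [hFp] at hFp0; linarith
    have hy1 : y < 1 := by rw [hFq] at hFq0; linarith
    have hls := log_sum_ineq t p q (fun b _ => hp0 b) (fun b _ => hq0 b) hne
    rw [hFp, hFq] at hls
    have hbp := binary_pinsker (hp0 a) hx1 (hq0 a) hy1
    have hdec := hsplit (fun b => p b * Real.log (p b / q b))
    have : 2 * (x - y) ^ 2 ≤ ∑ b, p b * Real.log (p b / q b) := by
      rw [← hdec]
      calc 2 * (x - y) ^ 2 ≤ x * Real.log (x / y) + (1 - x) * Real.log ((1 - x) / (1 - y)) := hbp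
        _ ≤ p a * Real.log (p a / q a) + ∑ b ∈ t, p b * Real.log (p b / q b) := by
            exact add_le_add le_rfl hls
    calc 2 * (q a - p a) ^ 2 = 2 * (x - y) ^ 2 := by ring
      _ ≤ _ := this

lemma cs_sqrt {ι : Type*} (t : Finset ι) (w x : ι → ℝ)
    (hw : ∀ i ∈ t, 0 ≤ w i) (hx : ∀ i ∈ t, 0 ≤ x i) (h1 : ∑ i ∈ t, w i ≤ 1) :
    ∑ i ∈ t, w i * Real.sqrt (x i) ≤ Real.sqrt (∑ i ∈ t, w i * x i) := by
  have hcs := Finset.sum_mul_sq_le_sq_mul_sq t (fun i => Real.sqrt (w i))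
    (fun i => Real.sqrt (w i * x i))
  have he1 : ∀ i ∈ t, Real.sqrt (w i) * Real.sqrt (w i * x i) = w i * Real.sqrt (x i) := by
    intro i hi
    rw [← Real.sqrt_mul (hw i hi), show w i * (w i * x i) = w i ^ 2 * x i by ring,
      Real.sqrt_mul (sq_nonneg _), Real.sqrt_sq (hw i hi)]
  have he2 : ∀ i ∈ t, Real.sqrt (w i) ^ 2 = w i := fun i hi => Real.sq_sqrt (hw i hi)
  have he3 : ∀ i ∈ t, Real.sqrt (w i * x i) ^ 2 = w i * x i := fun i hi =>
    Real.sq_sqrt (mul_nonneg (hw i hi) (hx i hi))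
  rw [Finset.sum_congr rfl he1, Finset.sum_congr rfl he2, Finset.sum_congr rfl he3] at hcs
  have hxs : 0 ≤ ∑ i ∈ t, w i * x i :=
    Finset.sum_nonneg fun i hi => mul_nonneg (hw i hi) (hx i hi)
  have hls : 0 ≤ ∑ i ∈ t, w i * Real.sqrt (x i) :=
    Finset.sum_nonneg fun i hi => mul_nonneg (hw i hi) (Real.sqrt_nonneg _)
  rw [← Real.sqrt_sq hls]
  apply Real.sqrt_le_sqrt
  calc (∑ i ∈ t, w i * Real.sqrt (x i)) ^ 2 ≤ (∑ i ∈ t, w i) * ∑ i ∈ t, w i * x i := hcs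
    _ ≤ 1 * ∑ i ∈ t, w i * x i := mul_le_mul_of_nonneg_right h1 hxs
    _ = _ := one_mul _

/-- First chain of inequalities in the proof of Theorem 1: if the expected prediction
KL divergence of the ToM model, under states `s ~ μ` and instructions `m` drawn from the
mixture `σ · Q_ToM(·|s) + (1−σ) · Uniform(M s)`, is at most `ε`, then the expected
(uniformly over the candidate pool) absolute deviation of the ToM model's goal-action
probability from the listener's is at most `√(ε / (2(1−σ)))`. -/
theorem expected_deviation_bound
    {S A ι : Type*} [Fintype S] [Fintype A]
    (μ : S → ℝ) (hμ0 : ∀ s, 0 ≤ μ s) (hμ1 : ∑ s, μ s = 1)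
    (M : S → Finset ι) (hM : ∀ s, (M s).Nonempty)
    (ag : S → A)
    (p q : S → ι → A → ℝ)
    (hp0 : ∀ s, ∀ m ∈ M s, ∀ a, 0 < p s m a)
    (hq0 : ∀ s, ∀ m ∈ M s, ∀ a, 0 < q s m a)
    (hp1 : ∀ s, ∀ m ∈ M s, ∑ a, p s m a = 1)
    (hq1 : ∀ s, ∀ m ∈ M s, ∑ a, q s m a = 1)
    (σ : ℝ) (hσ0 : 0 ≤ σ) (hσ1 : σ < 1)
    (ε : ℝ) (hε : 0 ≤ ε)
    (hopt : ∑ s, μ s * ∑ m ∈ M s,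
        (σ * (p s m (ag s) / ∑ m' ∈ M s, p s m' (ag s)) + (1 - σ) / (M s).card) *
          (∑ a, p s m a * Real.log (p s m a / q s m a)) ≤ ε) :
    ∑ s, μ s * ((1 / (M s).card) * ∑ m ∈ M s, |q s m (ag s) - p s m (ag s)|) ≤
      Real.sqrt (ε / (2 * (1 - σ))) := by
  classical
  set K : S → ι → ℝ := fun s m => ∑ a, p s m a * Real.log (p s m a / q s m a) with hKdef
  have hKpin : ∀ s, ∀ m ∈ M s, 2 * (q s m (ag s) - p s m (ag s)) ^ 2 ≤ K s m := fun s m hm =>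
    pointwise_pinsker (p s m) (q s m) (hp0 s m hm) (hq0 s m hm) (hp1 s m hm) (hq1 s m hm) (ag s)
  have hK0 : ∀ s, ∀ m ∈ M s, 0 ≤ K s m := fun s m hm =>
    le_trans (by positivity) (hKpin s m hm)
  have h1σ : (0 : ℝ) < 1 - σ := by linarith
  have hcard : ∀ s, (0 : ℝ) < ((M s).card : ℝ) := fun s => by
    exact_mod_cast Finset.card_pos.2 (hM s)
  -- Step A : uniform-weighted KL bound
  have hstepA : (1 - σ) * ∑ s, μ s * ∑ m ∈ M s, (1 / ((M s).card : ℝ)) * K s m ≤ ε := by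
    calc (1 - σ) * ∑ s, μ s * ∑ m ∈ M s, (1 / ((M s).card : ℝ)) * K s m
        = ∑ s, μ s * ∑ m ∈ M s, ((1 - σ) / ((M s).card : ℝ)) * K s m := by
          rw [Finset.mul_sum]
          refine Finset.sum_congr rfl fun s _ => ?_
          rw [← mul_assoc, mul_comm (1 - σ) (μ s), mul_assoc, Finset.mul_sum]
          congr 1
          exact Finset.sum_congr rfl fun m _ => by ring
      _ ≤ ∑ s, μ s * ∑ m ∈ M s,
            (σ * (p s m (ag s) / ∑ m' ∈ M s, p s m' (ag s)) + (1 - σ) / (M s).card) * K s m := by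
          refine Finset.sum_le_sum fun s _ => mul_le_mul_of_nonneg_left ?_ (hμ0 s)
          refine Finset.sum_le_sum fun m hm => mul_le_mul_of_nonneg_right ?_ (hK0 s m hm)
          have hQ : 0 ≤ p s m (ag s) / ∑ m' ∈ M s, p s m' (ag s) := by
            apply div_nonneg (hp0 s m hm (ag s)).le
            exact (Finset.sum_pos (fun m' hm' => hp0 s m' hm' (ag s)) (hM s)).le
          nlinarith [mul_nonneg hσ0 hQ]
      _ ≤ ε := hopt
  have hA : ∑ s, μ s * ∑ m ∈ M s, (1 / ((M s).card : ℝ)) * K s m ≤ ε / (1 - σ) := by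
    rw [le_div_iff₀ h1σ]
    linarith [hstepA]
  -- per-state Jensen/Cauchy-Schwarz
  set u : S → ℝ := fun s => ∑ m ∈ M s, (1 / ((M s).card : ℝ)) * (K s m / 2) with hudef
  have hu0 : ∀ s, 0 ≤ u s := fun s =>
    Finset.sum_nonneg fun m hm =>
      mul_nonneg (by positivity) (by linarith [hK0 s m hm])
  have hpers : ∀ s, (1 / ((M s).card : ℝ)) * ∑ m ∈ M s, |q s m (ag s) - p s m (ag s)| ≤
      Real.sqrt (u s) := by
    intro s
    have hw1 : ∑ _m ∈ M s, (1 / ((M s).card : ℝ)) = 1 := by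
      rw [Finset.sum_const, nsmul_eq_mul]
      field_simp
    calc (1 / ((M s).card : ℝ)) * ∑ m ∈ M s, |q s m (ag s) - p s m (ag s)|
        = ∑ m ∈ M s, (1 / ((M s).card : ℝ)) * |q s m (ag s) - p s m (ag s)| :=
          Finset.mul_sum _ _ _
      _ ≤ ∑ m ∈ M s, (1 / ((M s).card : ℝ)) * Real.sqrt (K s m / 2) := by
          refine Finset.sum_le_sum fun m hm => mul_le_mul_of_nonneg_left ?_ (by positivity)
          have hsq : (q s m (ag s) - p s m (ag s)) ^ 2 ≤ K s m / 2 := by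
            linarith [hKpin s m hm]
          calc |q s m (ag s) - p s m (ag s)|
              = Real.sqrt ((q s m (ag s) - p s m (ag s)) ^ 2) := (Real.sqrt_sq_eq_abs _).symm
            _ ≤ Real.sqrt (K s m / 2) := Real.sqrt_le_sqrt hsq
      _ ≤ Real.sqrt (∑ m ∈ M s, (1 / ((M s).card : ℝ)) * (K s m / 2)) := by
          apply cs_sqrt (M s) _ _ (fun m _ => by positivity)
            (fun m hm => by linarith [hK0 s m hm]) (le_of_eq hw1)
      _ = Real.sqrt (u s) := rfl
  -- assemble
  calc ∑ s, μ s * ((1 / ((M s).card : ℝ)) * ∑ m ∈ M s, |q s m (ag s) - p s m (ag s)|)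
      ≤ ∑ s, μ s * Real.sqrt (u s) :=
        Finset.sum_le_sum fun s _ => mul_le_mul_of_nonneg_left (hpers s) (hμ0 s)
    _ ≤ Real.sqrt (∑ s, μ s * u s) :=
        cs_sqrt Finset.univ μ u (fun s _ => hμ0 s) (fun s _ => hu0 s) (le_of_eq hμ1)
    _ ≤ Real.sqrt (ε / (2 * (1 - σ))) := by
        apply Real.sqrt_le_sqrt
        have heq : ∑ s, μ s * u s =
            (∑ s, μ s * ∑ m ∈ M s, (1 / ((M s).card : ℝ)) * K s m) / 2 := by
          rw [Finset.sum_div]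
          refine Finset.sum_congr rfl fun s _ => ?_
          rw [hudef]
          simp only
          rw [Finset.mul_sum, Finset.mul_sum, Finset.sum_div]
          exact Finset.sum_congr rfl fun m _ => by ring
        rw [heq]
        rw [show ε / (2 * (1 - σ)) = (ε / (1 - σ)) / 2 by rw [div_div]; ring]
        linarith [hA]
end

section
/- Let M be a nonempty finite set, δ > 0, and let p, q : M → ℝ with 0 < p(m) ≤ 1 and 0 < q(m) ≤ 1 for all m ∈ M, such that Σ_{m∈M} p(m) ≥ δ. Define the normalized distributions P(m) = p(m) / Σ_{m'∈M} p(m') and Q(m) = q(m) / Σ_{m'∈M} q(m'). Then KL(P‖Q) ≤ ( |M| · max_{m∈M} |q(m) − p(m)| + Σ_{m∈M} max( p(m)·log(p(m)/q(m)), 0 ) ) / δ. -/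
/-- Final KL estimate of Theorem 1: for weights `0 < p m ≤ 1`, `0 < q m ≤ 1` on a nonempty
finite pool `M` with `∑ p ≥ δ > 0`, the KL divergence between the normalized distributions
`P(m) = p m / ∑ p` and `Q(m) = q m / ∑ q` is bounded by
`(|M| · max |q - p| + ∑ max(p m · log (p m / q m), 0)) / δ`. -/
theorem kl_normalized_bound {ι : Type*} (M : Finset ι) (hM : M.Nonempty)
    (δ : ℝ) (hδ : 0 < δ)
    (p q : ι → ℝ)
    (hp : ∀ m ∈ M, 0 < p m) (hp1 : ∀ m ∈ M, p m ≤ 1)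
    (hq : ∀ m ∈ M, 0 < q m) (hq1 : ∀ m ∈ M, q m ≤ 1)
    (hpool : δ ≤ ∑ m ∈ M, p m) :
    ∑ m ∈ M, (p m / ∑ m' ∈ M, p m') *
        Real.log ((p m / ∑ m' ∈ M, p m') / (q m / ∑ m' ∈ M, q m')) ≤
      (M.card * M.sup' hM (fun m => |q m - p m|) +
        ∑ m ∈ M, max (p m * Real.log (p m / q m)) 0) / δ := by
  set S := ∑ m' ∈ M, p m' with hSdef
  set T := ∑ m' ∈ M, q m' with hTdef
  have hS : 0 < S := lt_of_lt_of_le hδ hpool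
  have hT : 0 < T := Finset.sum_pos hq hM
  -- rewrite each log term
  have hterm : ∀ m ∈ M, (p m / S) * Real.log ((p m / S) / (q m / T)) =
      (1 / S) * (p m * Real.log (p m / q m)) + (p m / S) * Real.log (T / S) := by
    intro m hm
    have hpm := hp m hm
    have hqm := hq m hm
    have h1 : (p m / S) / (q m / T) = (p m / q m) * (T / S) := by
      field_simp
    rw [h1, Real.log_mul (by positivity) (by positivity)]
    ring
  rw [Finset.sum_congr rfl hterm, Finset.sum_add_distrib, ← Finset.mul_sum]
  have h2sum : (∑ x ∈ M, p x / S * Real.log (T / S)) = Real.log (T / S) := by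
    rw [← Finset.sum_mul, ← Finset.sum_div, ← hSdef, div_self hS.ne', one_mul]
  rw [h2sum]
  set A := ∑ m ∈ M, p m * Real.log (p m / q m)
  set B := ∑ m ∈ M, max (p m * Real.log (p m / q m)) 0
  set C := (M.card : ℝ) * M.sup' hM (fun m => |q m - p m|)
  have hAB : A ≤ B := Finset.sum_le_sum fun m hm => le_max_left _ _
  have hB0 : 0 ≤ B := Finset.sum_nonneg fun m hm => le_max_right _ _
  have hC0 : 0 ≤ C := by
    have := hM
    obtain ⟨m0, hm0⟩ := hM
    have : (0:ℝ) ≤ M.sup' ⟨m0, hm0⟩ (fun m => |q m - p m|) :=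
      le_trans (abs_nonneg _) (Finset.le_sup' (fun m => |q m - p m|) hm0)
    positivity
  have hinv : 1 / S ≤ 1 / δ := one_div_le_one_div_of_le hδ hpool
  -- bound the first piece
  have h1 : 1 / S * A ≤ B / δ := by
    rcases le_or_gt A 0 with hA | hA
    · calc 1 / S * A ≤ 0 := mul_nonpos_of_nonneg_of_nonpos (by positivity) hA
        _ ≤ B / δ := by positivity
    · calc 1 / S * A ≤ 1 / δ * A := by
            exact mul_le_mul_of_nonneg_right hinv hA.le
        _ ≤ 1 / δ * B := by exact mul_le_mul_of_nonneg_left hAB (by positivity)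
        _ = B / δ := by ring
  -- bound the log ratio piece
  have hTS : |T - S| ≤ C := by
    have h1 : T - S = ∑ m ∈ M, (q m - p m) := by
      rw [hTdef, hSdef, Finset.sum_sub_distrib]
    rw [h1]
    calc |∑ m ∈ M, (q m - p m)| ≤ ∑ m ∈ M, |q m - p m| :=
          Finset.abs_sum_le_sum_abs _ _
      _ ≤ M.card • M.sup' hM (fun m => |q m - p m|) :=
          Finset.sum_le_card_nsmul _ _ _ (fun m hm => Finset.le_sup' (fun m => |q m - p m|) hm)
      _ = C := by simp [C, nsmul_eq_mul]
  have h2 : Real.log (T / S) ≤ C / δ := by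
    have hlog : Real.log (T / S) ≤ T / S - 1 :=
      Real.log_le_sub_one_of_pos (by positivity)
    have : T / S - 1 = (T - S) / S := by field_simp
    rw [this] at hlog
    rcases le_or_gt T S with h | h
    · calc Real.log (T / S) ≤ (T - S) / S := hlog
        _ ≤ 0 := div_nonpos_of_nonpos_of_nonneg (by linarith) hS.le
        _ ≤ C / δ := by positivity
    · calc Real.log (T / S) ≤ (T - S) / S := hlog
        _ ≤ (T - S) / δ := div_le_div_of_nonneg_left (by linarith) hδ hpool
        _ ≤ C / δ := by
            gcongr
            exact le_trans (le_abs_self _) hTS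
  calc 1 / S * A + Real.log (T / S) ≤ B / δ + C / δ := add_le_add h1 h2
    _ = (C + B) / δ := by ring
end
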